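/- The β-component of the score function of the generalized Heckman model has conditional mean zero given selection: ∫_{-∞}^{∞} [ z(y) − (ρ/√(1 − ρ²)) φ(ζ(y))/Φ(ζ(y)) ] · (1/(σ Φ(μ₂))) φ(z(y)) Φ(ζ(y)) dy = 0. -/

import Mathlib

open MeasureTheory Set

/-- Standard normal density. -/
noncomputable def phi (t : ℝ) : ℝ := Real.exp (-(t ^ 2) / 2) / Real.sqrt (2 * Real.pi)

/-- Standard normal cumulative distribution function. -/
noncomputable def Phi (x : ℝ) : ℝ := ∫ t in Set.Iic x, phi t

/-!
Writing `ζ = a + c z` with `a = μ₂ / √(1 - ρ²)` and `c = ρ / √(1 - ρ²)`, the integrand is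
`1 / (σ Φ(μ₂))` times `g(z(y))`, where `g(t) = t φ(t) Φ(a + c t) - c φ(t) φ(a + c t)`.
Since `φ'(t) = -t φ(t)` and `Φ' = φ`, `g` is minus the derivative of `φ(t) Φ(a + c t)`,
a function that is integrable together with its derivative, so `∫ g = 0`; the affine change
of variables `t = z(y)` then only rescales the integral.
-/

lemma phi_eq_gaussianPDFReal : phi = ProbabilityTheory.gaussianPDFReal 0 1 := by
  ext t
  simp [phi, ProbabilityTheory.gaussianPDFReal, div_eq_inv_mul]

lemma phi_pos (t : ℝ) : 0 < phi t := by
  unfold phi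
  positivity

lemma phi_le_one (t : ℝ) : phi t ≤ 1 := by
  have hexp : Real.exp (-(t ^ 2) / 2) ≤ 1 := Real.exp_le_one_iff.mpr (by nlinarith [sq_nonneg t])
  have hsqrt : 1 ≤ Real.sqrt (2 * Real.pi) :=
    Real.one_le_sqrt.mpr (by nlinarith [Real.pi_gt_three])
  exact div_le_one_of_le₀ (hexp.trans hsqrt) (by positivity)

lemma norm_phi_le_one (t : ℝ) : ‖phi t‖ ≤ 1 := by
  rw [Real.norm_of_nonneg (phi_pos t).le]
  exact phi_le_one t

lemma continuous_phi : Continuous phi := by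
  unfold phi
  fun_prop

lemma integrable_phi : Integrable phi := by
  rw [phi_eq_gaussianPDFReal]
  exact ProbabilityTheory.integrable_gaussianPDFReal _ _

lemma integral_phi : ∫ t, phi t = 1 := by
  rw [phi_eq_gaussianPDFReal]
  exact ProbabilityTheory.integral_gaussianPDFReal_eq_one _ one_ne_zero

lemma integrable_mul_phi : Integrable fun t => t * phi t := by
  have h := (integrable_mul_exp_neg_mul_sq (by norm_num : (0 : ℝ) < 1 / 2)).div_const
    (Real.sqrt (2 * Real.pi))
  refine h.congr (ae_of_all _ fun t => ?_)
  simp only [phi]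
  ring_nf

lemma hasDerivAt_phi (t : ℝ) : HasDerivAt phi (-t * phi t) t :=
  ((((hasDerivAt_id' t).pow 2).neg.div_const 2).exp.div_const _).congr_deriv <| by
    simp only [phi, Pi.neg_apply, Pi.pow_apply]
    ring

lemma Phi_pos (x : ℝ) : 0 < Phi x := by
  rw [Phi, setIntegral_pos_iff_support_of_nonneg_ae (ae_of_all _ fun t => (phi_pos t).le)
    integrable_phi.integrableOn, Function.support_eq_univ fun t => (phi_pos t).ne',
    univ_inter]
  simp

lemma Phi_le_one (x : ℝ) : Phi x ≤ 1 :=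
  integral_phi ▸ setIntegral_le_integral integrable_phi (ae_of_all _ fun t => (phi_pos t).le)

lemma norm_Phi_le_one (x : ℝ) : ‖Phi x‖ ≤ 1 := by
  rw [Real.norm_of_nonneg (Phi_pos x).le]
  exact Phi_le_one x

lemma hasDerivAt_Phi (x : ℝ) : HasDerivAt Phi (phi x) x := by
  have hPhi : Phi = fun u => Phi 0 + ∫ t in (0 : ℝ)..u, phi t := by
    ext u
    rw [← intervalIntegral.integral_Iic_sub_Iic integrable_phi.integrableOn
      integrable_phi.integrableOn, Phi, Phi]
    ring
  rw [hPhi]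
  exact (intervalIntegral.integral_hasDerivAt_right integrable_phi.intervalIntegrable
    (continuous_phi.stronglyMeasurableAtFilter _ _) continuous_phi.continuousAt).const_add _

lemma continuous_Phi : Continuous Phi :=
  continuous_iff_continuousAt.mpr fun x => (hasDerivAt_Phi x).continuousAt

lemma integral_comp_sub_div {E : Type*} [NormedAddCommGroup E] [NormedSpace ℝ E] (g : ℝ → E)
    (m s : ℝ) : ∫ y, g ((y - m) / s) = |s| • ∫ t, g t := by
  rw [integral_sub_right_eq_self (fun y => g (y / s)) m, Measure.integral_comp_div]

section Affine

variable (a c : ℝ)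

lemma hasDerivAt_phi_mul_Phi_affine (t : ℝ) :
    HasDerivAt (fun s => phi s * Phi (a + c * s))
      (-(t * phi t * Phi (a + c * t) - c * phi t * phi (a + c * t))) t := by
  have hinner : HasDerivAt (fun s => a + c * s) c t := by
    simpa using ((hasDerivAt_id t).const_mul c).const_add a
  refine ((hasDerivAt_phi t).mul ((hasDerivAt_Phi (a + c * t)).comp t hinner)).congr_deriv ?_
  simp only [Function.comp_apply]
  ring

lemma integrable_phi_mul_Phi_affine : Integrable fun t => phi t * Phi (a + c * t) :=
  integrable_phi.mul_bdd (continuous_Phi.comp (by fun_prop)).aestronglyMeasurable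
    (ae_of_all _ fun _ => norm_Phi_le_one _)

lemma integrable_deriv_phi_mul_Phi_affine :
    Integrable fun t => t * phi t * Phi (a + c * t) - c * phi t * phi (a + c * t) :=
  (integrable_mul_phi.mul_bdd (continuous_Phi.comp (by fun_prop)).aestronglyMeasurable
    (ae_of_all _ fun _ => norm_Phi_le_one _)).sub
  ((integrable_phi.const_mul c).mul_bdd (continuous_phi.comp (by fun_prop)).aestronglyMeasurable
    (ae_of_all _ fun _ => norm_phi_le_one _))

lemma integral_score_mul_phi_mul_Phi_affine :
    ∫ t, (t - c * (phi (a + c * t) / Phi (a + c * t))) * (phi t * Phi (a + c * t)) = 0 := by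
  have hderiv := integral_eq_zero_of_hasDerivAt_of_integrable (hasDerivAt_phi_mul_Phi_affine a c)
    (integrable_deriv_phi_mul_Phi_affine a c).neg (integrable_phi_mul_Phi_affine a c)
  rw [integral_neg, neg_eq_zero] at hderiv
  rw [← hderiv]
  congr 1 with t
  have hΦ := (Phi_pos (a + c * t)).ne'
  generalize a + c * t = u at hΦ ⊢
  field_simp

end Affine

theorem GH_beta_score_conditional_mean_zero_general (μ₁ μ₂ σ ρ : ℝ)
    (z ζ : ℝ → ℝ)
    (hz : ∀ y, z y = (y - μ₁) / σ)
    (hζ : ∀ y, ζ y = (μ₂ + ρ * z y) / Real.sqrt (1 - ρ ^ 2)) :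
    (∫ y : ℝ, (z y - (ρ / Real.sqrt (1 - ρ ^ 2)) * (phi (ζ y) / Phi (ζ y)))
        * ((1 / (σ * Phi μ₂)) * phi (z y) * Phi (ζ y))) = 0 := by
  set a := μ₂ / Real.sqrt (1 - ρ ^ 2)
  set c := ρ / Real.sqrt (1 - ρ ^ 2)
  have hζ_affine : ∀ y, ζ y = a + c * z y := fun y => by rw [hζ]; ring
  set g : ℝ → ℝ := fun t =>
    (t - c * (phi (a + c * t) / Phi (a + c * t))) * (phi t * Phi (a + c * t))
  have hintegrand : ∀ y, (z y - c * (phi (ζ y) / Phi (ζ y)))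
      * ((1 / (σ * Phi μ₂)) * phi (z y) * Phi (ζ y)) = (σ * Phi μ₂)⁻¹ * g ((y - μ₁) / σ) := by
    intro y
    simp only [g, hζ_affine, hz]
    ring
  simp_rw [hintegrand]
  rw [integral_const_mul, integral_comp_sub_div, integral_score_mul_phi_mul_Phi_affine, smul_zero,
    mul_zero]

theorem GH_beta_score_conditional_mean_zero (μ₁ μ₂ σ ρ : ℝ) (hσ : 0 < σ) (hρ₁ : -1 < ρ) (hρ₂ : ρ < 1)
    (z ζ : ℝ → ℝ)
    (hz : ∀ y, z y = (y - μ₁) / σ)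
    (hζ : ∀ y, ζ y = (μ₂ + ρ * z y) / Real.sqrt (1 - ρ ^ 2)) :
    (∫ y : ℝ, (z y - (ρ / Real.sqrt (1 - ρ ^ 2)) * (phi (ζ y) / Phi (ζ y)))
        * ((1 / (σ * Phi μ₂)) * phi (z y) * Phi (ζ y))) = 0 :=
  GH_beta_score_conditional_mean_zero_general μ₁ μ₂ σ ρ z ζ hz hζ
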